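/- arXiv:1401.1513 — 12 statements merged into one kernel-verified Lean document; each statement's English description precedes it below -/
import Mathlib

section
/- Let f : ℝ → ℝ be given by f(λ1) = 1 − 2·λ1 if λ1 ≤ 1/3 and f(λ1) = (1 − λ1)²/(4·λ1) if λ1 > 1/3. Then the union, over all access probabilities p1 ∈ [0,1] and p2 ∈ [0,1], of Region1(p1,p2), together with the union over all p1 ∈ [0,1) and p2 ∈ [0,1] of Region2(p1,p2), equals the set {(λ1,λ2) ∈ (0,1)×(0,1) : λ2 < f(λ1)}. -/
noncomputable def f (l1 : ℝ) : ℝ := if l1 ≤ 1/3 then 1 - 2*l1 else (1 - l1)^2 / (4*l1)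

def Region1 (p1 p2 : ℝ) : Set (ℝ × ℝ) :=
  {l : ℝ × ℝ | l.1 ∈ Set.Ioo (0:ℝ) 1 ∧ l.2 ∈ Set.Ioo (0:ℝ) 1 ∧
    l.1 < p1 / (1 + p1*p2) ∧ l.2 < p2 * (1 - l.1 - l.1*p2)}

def Region2 (p1 p2 : ℝ) : Set (ℝ × ℝ) :=
  {l : ℝ × ℝ | l.1 ∈ Set.Ioo (0:ℝ) 1 ∧ l.2 ∈ Set.Ioo (0:ℝ) 1 ∧
    l.2 < p2 * (1 - p1) / (1 + p1*p2) ∧ l.1 < p1 * (1 - p1 - l.2*p1) / (1 - p1)}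

lemma reg1_key (l1 l2 b : ℝ) (h10 : 0 < l1) (h11 : l1 < 1) (hb0 : 0 ≤ b) (hb1 : b ≤ 1)
    (h : l2 < b * (1 - l1 - l1 * b)) : l2 < f l1 := by
  unfold f
  split_ifs with hc
  · -- l2 < 1 - 2 l1 : (1-b)(1-2l1-l1b) ≥ 0
    nlinarith [mul_nonneg (by linarith : (0:ℝ) ≤ 1 - b)
      (by nlinarith : (0:ℝ) ≤ 1 - 2*l1 - l1*b)]
  · push_neg at hc
    rw [lt_div_iff₀ (by linarith : (0:ℝ) < 4*l1)]
    nlinarith [sq_nonneg (1 - l1 - 2*l1*b)]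

lemma reg2_key (l1 l2 a b : ℝ) (h10 : 0 < l1) (h11 : l1 < 1) (h20 : 0 < l2) (h21 : l2 < 1)
    (ha0 : 0 ≤ a) (ha1 : a < 1) (hb0 : 0 ≤ b) (hb1 : b ≤ 1)
    (hA : l2 < b * (1 - a) / (1 + a*b)) (hB : l1 < a * (1 - a - l2*a) / (1 - a)) : l2 < f l1 := by
  have hden1 : (0:ℝ) < 1 + a*b := by nlinarith
  have hden2 : (0:ℝ) < 1 - a := by linarith
  rw [lt_div_iff₀ hden1] at hA
  rw [lt_div_iff₀ hden2] at hB
  unfold f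
  split_ifs with hc
  · -- goal l2 < 1 - 2*l1
    rcases le_or_gt a (1/2) with hhalf | hhalf
    · -- l2*(1+a) < 1-a, then (1-a)(1-2l1-l2) > (1-2a)((1-a)-l2(1+a)) ≥ 0
      have tri : l2 * (1 + a) < 1 - a := by
        nlinarith [mul_nonneg (by linarith : (0:ℝ) ≤ 1 - a) (by linarith : (0:ℝ) ≤ 1 - b)]
      nlinarith [mul_nonneg (by linarith : (0:ℝ) ≤ 1 - 2*a) (by linarith : (0:ℝ) ≤ (1-a) - l2*(1+a))]
    · -- a ≥ 1/2: l2 a² < (a-l1)(1-a) ≤ a²(1-2l1)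
      nlinarith [mul_nonneg (by linarith : (0:ℝ) ≤ 2*a - 1) (by nlinarith : (0:ℝ) ≤ (1-l1)*a - l1),
        mul_pos (by linarith : (0:ℝ) < a) (by linarith : (0:ℝ) < a)]
  · push_neg at hc
    rw [lt_div_iff₀ (by linarith : (0:ℝ) < 4*l1)]
    -- 4 l1 l2 < (1-l1)^2
    have h3 : (1-a)^2 + l2*a^2 < (1-l1)*(1-a) := by nlinarith
    have h4 : ((1-a)^2 + l2*a^2)^2 < ((1-l1)*(1-a))^2 := by
      have hpos : (0:ℝ) ≤ (1-a)^2 + l2*a^2 := by positivity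
      nlinarith
    nlinarith [sq_nonneg ((1-a)^2 - l2*a*(2-a)), h4, hB,
      mul_pos h20 hden2, mul_pos hden2 hden2,
      mul_pos (mul_pos h20 hden2) (by nlinarith : (0:ℝ) < a*(1-a) - l2*a^2 - l1*(1-a) + l1*(1-a))]

theorem stability_region_boundary :
    ((⋃ p1 ∈ Set.Icc (0:ℝ) 1, ⋃ p2 ∈ Set.Icc (0:ℝ) 1, Region1 p1 p2) ∪
     (⋃ p1 ∈ Set.Ico (0:ℝ) 1, ⋃ p2 ∈ Set.Icc (0:ℝ) 1, Region2 p1 p2)) =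
    {l : ℝ × ℝ | l.1 ∈ Set.Ioo (0:ℝ) 1 ∧ l.2 ∈ Set.Ioo (0:ℝ) 1 ∧ l.2 < f l.1} := by
  ext ⟨l1, l2⟩
  simp only [Region1, Region2, Set.mem_union, Set.mem_iUnion, Set.mem_setOf_eq,
    Set.mem_Ioo, Set.mem_Icc, Set.mem_Ico]
  constructor
  · rintro (⟨a, ⟨ha0, ha1⟩, b, ⟨hb0, hb1⟩, ⟨h10, h11⟩, ⟨h20, h21⟩, hA, hB⟩ |
      ⟨a, ⟨ha0, ha1⟩, b, ⟨hb0, hb1⟩, ⟨h10, h11⟩, ⟨h20, h21⟩, hA, hB⟩)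
    · exact ⟨⟨h10, h11⟩, ⟨h20, h21⟩, reg1_key l1 l2 b h10 h11 hb0 hb1 hB⟩
    · exact ⟨⟨h10, h11⟩, ⟨h20, h21⟩, reg2_key l1 l2 a b h10 h11 h20 h21 ha0 ha1 hb0 hb1 hA hB⟩
  · rintro ⟨⟨h10, h11⟩, ⟨h20, h21⟩, hf⟩
    left
    unfold f at hf
    by_cases hc : l1 ≤ 1/3
    · rw [if_pos hc] at hf
      refine ⟨1, ⟨zero_le_one, le_refl 1⟩, 1, ⟨zero_le_one, le_refl 1⟩,
        ⟨h10, h11⟩, ⟨h20, h21⟩, ?_, ?_⟩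
      · norm_num; linarith
      · norm_num; linarith
    · rw [if_neg hc] at hf
      push_neg at hc
      set q : ℝ := (1 - l1) / (2*l1) with hq
      have hqpos : 0 < q := div_pos (by linarith) (by linarith)
      have hq1 : q ≤ 1 := by
        rw [hq, div_le_one (by linarith)]; linarith
      refine ⟨1, ⟨zero_le_one, le_refl 1⟩, q, ⟨le_of_lt hqpos, hq1⟩,
        ⟨h10, h11⟩, ⟨h20, h21⟩, ?_, ?_⟩
      · rw [one_mul, lt_div_iff₀ (by linarith)]
        have h : l1 * (1 + q) = (1 + l1)/2 := by
          rw [hq]; field_simp; ring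
        nlinarith [h]
      · have : q * (1 - l1 - l1*q) = (1-l1)^2/(4*l1) := by
          rw [hq]; field_simp; ring
        rw [this]; exact hf
end

section
/- Let f : ℝ → ℝ be given by f(λ1) = 1 − 2·λ1 if λ1 ≤ 1/3 and f(λ1) = (1 − λ1)²/(4·λ1) if λ1 > 1/3. Then the union, over all access probabilities p1 ∈ [0,1] and p2 ∈ [0,1], of Region1(p1,p2) equals the set {(λ1,λ2) ∈ (0,1)×(0,1) : λ2 < f(λ1)}. -/
theorem dominant_system1_union :
    (⋃ p1 ∈ Set.Icc (0:ℝ) 1, ⋃ p2 ∈ Set.Icc (0:ℝ) 1, Region1 p1 p2) =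
    {l : ℝ × ℝ | l.1 ∈ Set.Ioo (0:ℝ) 1 ∧ l.2 ∈ Set.Ioo (0:ℝ) 1 ∧ l.2 < f l.1} := by
  ext l
  simp only [Set.mem_iUnion, Region1, Set.mem_setOf_eq, Set.mem_Icc, Set.mem_Ioo, exists_prop]
  constructor
  · rintro ⟨p1, hp1, p2, hp2, h1, h2, h3, h4⟩
    refine ⟨h1, h2, ?_⟩
    have hl0 := h1.1
    have hl1 := h1.2
    unfold f
    split_ifs with h
    · nlinarith [h4, mul_nonneg (by linarith [hp2.2] : (0:ℝ) ≤ 1 - p2)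
        (by nlinarith [hp2.1, hp2.2] : (0:ℝ) ≤ 1 - l.1 * (2 + p2))]
    · push_neg at h
      rw [lt_div_iff₀ (by linarith : (0:ℝ) < 4 * l.1)]
      nlinarith [sq_nonneg (1 - l.1 - 2*l.1*p2), hp2.1, hp2.2]
  · rintro ⟨h1, h2, h3⟩
    have hl0 := h1.1
    have hl1 := h1.2
    by_cases h : l.1 ≤ 1/3
    · refine ⟨1, ⟨zero_le_one, le_refl 1⟩, 1, ⟨zero_le_one, le_refl 1⟩, h1, h2, ?_, ?_⟩
      · norm_num; linarith
      · simp only [f, if_pos h] at h3; nlinarith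
    · push_neg at h
      refine ⟨1, ⟨zero_le_one, le_refl 1⟩, (1-l.1)/(2*l.1),
        ⟨div_nonneg (by linarith) (by linarith), ?_⟩, h1, h2, ?_, ?_⟩
      · rw [div_le_one (by linarith)]; linarith
      · have hq : (0:ℝ) ≤ (1-l.1)/(2*l.1) := div_nonneg (by linarith) (by linarith)
        have hd : (0:ℝ) < 1 + 1 * ((1-l.1)/(2*l.1)) := by linarith
        rw [lt_div_iff₀ hd]
        have : l.1 * (1 + 1 * ((1-l.1)/(2*l.1))) = l.1 + (1-l.1)/2 := by
          field_simp
        rw [this]; linarith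
      · simp only [f, if_neg (not_le.mpr h)] at h3
        have : (1-l.1)/(2*l.1) * (1 - l.1 - l.1 * ((1-l.1)/(2*l.1))) = (1-l.1)^2/(4*l.1) := by
          field_simp; ring
        rw [this]; exact h3
end

section
/- Let f : ℝ → ℝ be given by f(λ1) = 1 − 2·λ1 if λ1 ≤ 1/3 and f(λ1) = (1 − λ1)²/(4·λ1) if λ1 > 1/3. Then the union, over all access probabilities p1 ∈ [0,1) and p2 ∈ [0,1], of Region2(p1,p2) equals the set {(λ1,λ2) ∈ (0,1)×(0,1) : λ2 < f(λ1)}. -/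
private lemma caseA (l1 l2 : ℝ) (hl10 : 0 < l1) (hl20 : 0 < l2) (hl21 : l2 < 1)
    (hc : l2 < 1 - 2*l1) :
    ∃ p : ℝ, 0 ≤ p ∧ p < 1 ∧ (1+l2)*p < 1-l2 ∧ (1+l2)*p^2 - (1+l1)*p + l1 < 0 := by
  have h1a : (0:ℝ) < 1 + l2 := by linarith
  have hm : 0 < l2*(1-l2-2*l1) := mul_pos hl20 (by linarith)
  refine ⟨(8*(1-l2) - l2*(1-l2-2*l1)) / (8*(1+l2)), ?_, ?_, ?_, ?_⟩
  · apply div_nonneg _ (by linarith)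
    nlinarith
  · rw [div_lt_one (by linarith)]
    nlinarith
  · rw [mul_comm, div_mul_eq_mul_div, div_lt_iff₀ (by linarith : (0:ℝ) < 8*(1+l2))]
    nlinarith
  · have key : (1+l2)*((8*(1-l2) - l2*(1-l2-2*l1)) / (8*(1+l2)))^2
        - (1+l1)*((8*(1-l2) - l2*(1-l2-2*l1)) / (8*(1+l2))) + l1
        = (l2*(1-l2-2*l1)) * ((1+l2)*(l2*(1-l2-2*l1)) + 8*(1+l2)*(l1+2*l2-9))
          / (64*(1+l2)^2) := by
      field_simp
      ring
    rw [key]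
    apply div_neg_of_neg_of_pos _ (by positivity)
    apply mul_neg_of_pos_of_neg hm
    nlinarith

private lemma caseB (l1 l2 : ℝ) (hl10 : 0 < l1) (hl11 : l1 < 1) (hl20 : 0 < l2)
    (hl13 : 1/3 < l1) (hD : 4*l1*l2 < (1-l1)^2) :
    ∃ p : ℝ, 0 ≤ p ∧ p < 1 ∧ (1+l2)*p < 1-l2 ∧ (1+l2)*p^2 - (1+l1)*p + l1 < 0 := by
  have h1a : (0:ℝ) < 1 + l2 := by linarith
  have hl2third : l2 < 1/3 := by nlinarith
  have hfrac0 : 0 < l2/(1+l2) := div_pos hl20 h1a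
  have hspos : 0 < Real.sqrt (l2/(1+l2)) := Real.sqrt_pos.mpr hfrac0
  set s : ℝ := Real.sqrt (l2/(1+l2)) with hs
  have hs2 : (1+l2)*s^2 = l2 := by
    rw [hs, Real.sq_sqrt hfrac0.le]; field_simp
  have hslt1 : s < 1 := by nlinarith
  have hc0 : 0 < 1 + 2*l2 - l1 := by linarith
  have hkey : (1 + 2*l2 - l1)*s > 2*l2 := by
    by_contra h
    push_neg at h
    have h1 : ((1+2*l2-l1)*s)^2 ≤ (2*l2)^2 := by
      nlinarith [mul_pos hc0 hspos]
    nlinarith [hs2, mul_pos hl20 (by nlinarith : (0:ℝ) < (1-l1)^2 - 4*l1*l2)]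
  have hkey2 : (1+l2)*s > 2*l2 := by
    by_contra h
    push_neg at h
    have h1 : ((1+l2)*s)^2 ≤ (2*l2)^2 := by
      nlinarith [mul_pos h1a hspos]
    nlinarith [hs2, mul_pos hl20 (by linarith : (0:ℝ) < 1 - 3*l2)]
  refine ⟨1 - s, by linarith, by linarith, by nlinarith, by nlinarith [hs2, hkey]⟩

theorem dominant_system2_union :
    (⋃ p1 ∈ Set.Ico (0:ℝ) 1, ⋃ p2 ∈ Set.Icc (0:ℝ) 1, Region2 p1 p2) =
    {l : ℝ × ℝ | l.1 ∈ Set.Ioo (0:ℝ) 1 ∧ l.2 ∈ Set.Ioo (0:ℝ) 1 ∧ l.2 < f l.1} := by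
  ext ⟨l1, l2⟩
  simp only [Set.mem_iUnion, Set.mem_setOf_eq, Region2, Set.mem_Ico, Set.mem_Icc,
    Set.mem_Ioo]
  constructor
  · rintro ⟨p1, ⟨hp10, hp11⟩, p2, ⟨hp20, hp21⟩, ⟨hl10, hl11⟩, ⟨hl20, hl21⟩, h2, h1⟩
    refine ⟨⟨hl10, hl11⟩, ⟨hl20, hl21⟩, ?_⟩
    have hden2 : (0:ℝ) < 1 + p1*p2 := by nlinarith
    have hden1 : (0:ℝ) < 1 - p1 := by linarith
    have h2' : l2 * (1 + p1*p2) < p2 * (1 - p1) := (lt_div_iff₀ hden2).mp h2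
    have h1' : l1 * (1 - p1) < p1 * (1 - p1 - l2*p1) := (lt_div_iff₀ hden1).mp h1
    have hT : 0 < 1 - p1 - l2*p1 := by nlinarith
    have key1 : l2 * (1 + p1) < 1 - p1 := by
      nlinarith [mul_nonneg (sub_nonneg.mpr hp21) hT.le]
    unfold f
    by_cases hc : l1 ≤ 1/3
    · rw [if_pos hc]
      by_cases hc2 : l2 < 1/3
      · linarith
      · push_neg at hc2
        have hhalf : (1:ℝ) - 2*p1 > 0 := by
          nlinarith [mul_nonneg hp10 (by linarith : (0:ℝ) ≤ 3*l2 - 1)]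
        have hfac : (1 - 2*p1) * ((1 - l2) - (1 + l2)*p1) > 0 := by
          apply mul_pos hhalf; nlinarith
        nlinarith [h1']
    · rw [if_neg hc]
      push_neg at hc
      rw [lt_div_iff₀ (by linarith : (0:ℝ) < 4*l1)]
      nlinarith [sq_nonneg (2*(1+l2)*p1 - (1+l1)), mul_pos (by linarith : (0:ℝ) < 1+l2)
        (show (0:ℝ) < p1*(1-p1-l2*p1) - l1*(1-p1) by linarith)]
  · rintro ⟨⟨hl10, hl11⟩, ⟨hl20, hl21⟩, hf⟩
    have hex : ∃ p : ℝ, 0 ≤ p ∧ p < 1 ∧ (1+l2)*p < 1-l2 ∧ (1+l2)*p^2 - (1+l1)*p + l1 < 0 := by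
      by_cases hc : l2 < 1 - 2*l1
      · exact caseA l1 l2 hl10 hl20 hl21 hc
      · push_neg at hc
        have hl13 : 1/3 < l1 := by
          by_contra h
          push_neg at h
          rw [f, if_pos h] at hf
          linarith
        have hfv : l2 < (1-l1)^2/(4*l1) := by
          rwa [f, if_neg (not_le.mpr hl13)] at hf
        have hD : 4*l1*l2 < (1-l1)^2 := by
          have := (lt_div_iff₀ (by linarith : (0:ℝ) < 4*l1)).mp hfv
          nlinarith
        exact caseB l1 l2 hl10 hl11 hl20 hl13 hD
    obtain ⟨p, hp0, hp1, hplt, hQ⟩ := hex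
    refine ⟨p, ⟨hp0, hp1⟩, 1, ⟨zero_le_one, le_refl 1⟩, ⟨hl10, hl11⟩, ⟨hl20, hl21⟩, ?_, ?_⟩
    · rw [lt_div_iff₀ (by nlinarith : (0:ℝ) < 1 + p*1)]
      nlinarith
    · rw [lt_div_iff₀ (by linarith : (0:ℝ) < 1 - p)]
      nlinarith
end

section
/- Let f : ℝ → ℝ be given by f(λ1) = 1 − 2·λ1 if λ1 ≤ 1/3 and f(λ1) = (1 − λ1)²/(4·λ1) if λ1 > 1/3. For all λ1, λ2 ∈ (0,1) with √λ1 + √λ2 ≤ 1, one has λ2 < f(λ1). Hence the stability region of the conventional random access scheme, whose boundary is √λ1 + √λ2 = 1, is contained in the stability region {(λ1,λ2) ∈ (0,1)² : λ2 < f(λ1)} of the random access scheme with priorities. -/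
theorem RA_region_subset_priority_region (l1 l2 : ℝ)
    (hl1 : l1 ∈ Set.Ioo (0:ℝ) 1) (hl2 : l2 ∈ Set.Ioo (0:ℝ) 1)
    (h : Real.sqrt l1 + Real.sqrt l2 ≤ 1) : l2 < f l1 := by
  obtain ⟨h1, h1'⟩ := hl1
  obtain ⟨h2, h2'⟩ := hl2
  set s := Real.sqrt l1 with hs
  set t := Real.sqrt l2 with ht
  have hs0 : 0 < s := Real.sqrt_pos.mpr h1
  have ht0 : 0 < t := Real.sqrt_pos.mpr h2
  have hs2 : s^2 = l1 := Real.sq_sqrt h1.le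
  have ht2 : t^2 = l2 := Real.sq_sqrt h2.le
  have hts : t ≤ 1 - s := by linarith
  have hl2le : l2 ≤ (1 - s)^2 := by
    rw [← ht2]; nlinarith
  have hs1 : s < 1 := by nlinarith
  unfold f
  split_ifs with hc
  · -- l1 ≤ 1/3, so s^2 ≤ 1/3
    have h23 : 3 * s < 2 := by nlinarith
    nlinarith
  · push_neg at hc
    rw [lt_div_iff₀ (by linarith : (0:ℝ) < 4 * l1)]
    have k1 : 4 * s^2 < (1 + s)^2 := by nlinarith
    have k2 : (0:ℝ) < (1 - s)^2 := by nlinarith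
    nlinarith [mul_lt_mul_of_pos_left k1 k2,
      mul_le_mul_of_nonneg_right hl2le (by positivity : (0:ℝ) ≤ 4 * s^2)]
end

section
/- Let f : ℝ → ℝ be given by f(λ1) = 1 − 2·λ1 if λ1 ≤ 1/3 and f(λ1) = (1 − λ1)²/(4·λ1) if λ1 > 1/3. There exist λ1, λ2 ∈ (0,1) with λ2 < f(λ1) and √λ1 + √λ2 > 1; hence the containment of the conventional random access stability region in the priority-scheme stability region is strict. -/
theorem priority_region_strictly_larger :
    ∃ l1 l2 : ℝ, l1 ∈ Set.Ioo (0:ℝ) 1 ∧ l2 ∈ Set.Ioo (0:ℝ) 1 ∧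
      l2 < f l1 ∧ 1 < Real.sqrt l1 + Real.sqrt l2 := by
  refine ⟨1/4, 3/10, ⟨by norm_num, by norm_num⟩, ⟨by norm_num, by norm_num⟩, ?_, ?_⟩
  · simp [f]; norm_num
  · have h1 : Real.sqrt (1/4) = 1/2 := by
      rw [show (1/4 : ℝ) = (1/2)^2 by norm_num, Real.sqrt_sq (by norm_num)]
    have h2 : (1/2 : ℝ) < Real.sqrt (3/10) := by
      have h := Real.sqrt_lt_sqrt (by norm_num : (0:ℝ) ≤ 1/4) (by norm_num : (1/4:ℝ) < 3/10)
      rwa [h1] at h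
    linarith
end

section
/- Let λ1, λ2 ∈ (0,1), p1 ∈ (0,1), p2 ∈ (0,1]. If λ1 < p1/(1 + p1·p2) and λ2 < p2·(1 − p1)/(1 + p1·p2), then λ2 < p2·(1 − λ1 − λ1·p2) and λ1 < p1·(1 − p1 − λ2·p1)/(1 − p1). In other words, the Dominant-System-3 region {λ1 < p1/(1+p1·p2), λ2 < p2·(1−p1)/(1+p1·p2)} is contained in the intersection of the Dominant-System-1 region and the Dominant-System-2 region. -/
theorem dominant3_subset_intersection (l1 l2 p1 p2 : ℝ)
    (hl1 : l1 ∈ Set.Ioo (0:ℝ) 1) (hl2 : l2 ∈ Set.Ioo (0:ℝ) 1)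
    (hp1 : p1 ∈ Set.Ioo (0:ℝ) 1) (hp2 : p2 ∈ Set.Ioc (0:ℝ) 1)
    (h1 : l1 < p1 / (1 + p1*p2)) (h2 : l2 < p2 * (1 - p1) / (1 + p1*p2)) :
    l2 < p2 * (1 - l1 - l1*p2) ∧ l1 < p1 * (1 - p1 - l2*p1) / (1 - p1) := by
  obtain ⟨hl10, hl11⟩ := hl1
  obtain ⟨hl20, hl21⟩ := hl2
  obtain ⟨hp10, hp11⟩ := hp1
  obtain ⟨hp20, hp21⟩ := hp2
  have hd : (0:ℝ) < 1 + p1*p2 := by nlinarith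
  rw [lt_div_iff₀ hd] at h1
  rw [lt_div_iff₀ hd] at h2
  constructor
  · nlinarith [mul_lt_mul_of_pos_left h1 hp20, mul_lt_mul_of_pos_left h1 (mul_pos hp20 hp20), mul_pos hl20 (mul_pos hp10 hp20)]
  · rw [lt_div_iff₀ (by linarith : (0:ℝ) < 1 - p1)]
    nlinarith [mul_pos hp10 hp20, mul_pos hl10 (mul_pos hp10 hp20)]
end

section
/- Let λ1 ∈ (0,1), p1 ∈ (0,1], p2 ∈ [0,1], and define ρ := λ1·(1 − p1 + λ1·p1·p2)/(p1·(1 − λ1)·(1 − λ1·p2)). Then ρ < 1 if and only if λ1 < p1/(1 + p1·p2). -/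
theorem rho_lt_one_iff (l1 p1 p2 : ℝ)
    (hl1 : l1 ∈ Set.Ioo (0:ℝ) 1) (hp1 : p1 ∈ Set.Ioc (0:ℝ) 1) (hp2 : p2 ∈ Set.Icc (0:ℝ) 1) :
    l1 * (1 - p1 + l1*p1*p2) / (p1 * (1 - l1) * (1 - l1*p2)) < 1 ↔
      l1 < p1 / (1 + p1*p2) := by
  obtain ⟨hl0, hl1'⟩ := hl1
  obtain ⟨hp10, hp11⟩ := hp1
  obtain ⟨hp20, hp21⟩ := hp2
  have h1 : l1 * p2 < 1 := by nlinarith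
  have hden : 0 < p1 * (1 - l1) * (1 - l1*p2) := mul_pos (mul_pos hp10 (by linarith)) (by linarith)
  have hden2 : 0 < 1 + p1*p2 := by positivity
  rw [div_lt_one hden, lt_div_iff₀ hden2]
  constructor <;> intro h <;> nlinarith
end

section
/- Let λ1 ∈ (0,1), p1 ∈ (0,1], p2 ∈ [0,1], and suppose λ1 < p1/(1 + p1·p2). Define ρ := λ1·(1 − p1 + λ1·p1·p2)/(p1·(1 − λ1)·(1 − λ1·p2)) and π0 := (p1 − λ1·(1 + p1·p2))/(p1·(1 − λ1)). Then π0 · (1 + λ1·p2/(1 − λ1·p2)) · (∑' k : ℕ, ρ^k) = 1. -/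
/-!
The normalization sum is `π₀ · (1 - λ₁p₂)⁻¹ · (1 - ρ)⁻¹`, since `1 + a / (1 - a) = (1 - a)⁻¹` and the
geometric series converges: `0 ≤ ρ` because `p₁ ≤ 1`, and `ρ < 1` is exactly the stability condition,
as the numerator of `1 - ρ` over the common denominator is `p₁ - λ₁(1 + p₁p₂)`. That same numerator
makes `π₀ = (1 - ρ)(1 - λ₁p₂)`, so the product is `1`.
-/

namespace DominantSystem

noncomputable def rho (l1 p1 p2 : ℝ) : ℝ :=
  l1 * (1 - p1 + l1*p1*p2) / (p1 * (1 - l1) * (1 - l1*p2))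

noncomputable def pi0 (l1 p1 p2 : ℝ) : ℝ :=
  (p1 - l1*(1 + p1*p2)) / (p1 * (1 - l1))

theorem one_sub_rho {l1 p1 p2 : ℝ} (hden : p1 * (1 - l1) * (1 - l1*p2) ≠ 0) :
    1 - rho l1 p1 p2 = (p1 - l1*(1 + p1*p2)) / (p1 * (1 - l1) * (1 - l1*p2)) := by
  rw [rho, eq_div_iff hden, sub_mul, one_mul, div_mul_cancel₀ _ hden]
  ring

theorem pi0_eq_one_sub_rho_mul {l1 p1 p2 : ℝ} (hden : p1 * (1 - l1) * (1 - l1*p2) ≠ 0) :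
    pi0 l1 p1 p2 = (1 - rho l1 p1 p2) * (1 - l1*p2) := by
  rw [one_sub_rho hden, pi0, div_mul_eq_mul_div, mul_div_mul_right _ _ (right_ne_zero_of_mul hden)]

theorem rho_nonneg {l1 p1 p2 : ℝ} (hl1 : 0 ≤ l1) (hp1₀ : 0 ≤ p1) (hp1 : p1 ≤ 1) (hp2 : 0 ≤ p2)
    (hden : 0 < p1 * (1 - l1) * (1 - l1*p2)) : 0 ≤ rho l1 p1 p2 := by
  have hnum : 0 ≤ 1 - p1 + l1*p1*p2 := by
    have : 0 ≤ l1*p1*p2 := by positivity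
    linarith
  exact div_nonneg (mul_nonneg hl1 hnum) hden.le

theorem rho_lt_one {l1 p1 p2 : ℝ} (hstab : l1*(1 + p1*p2) < p1)
    (hden : 0 < p1 * (1 - l1) * (1 - l1*p2)) : rho l1 p1 p2 < 1 := by
  have : 0 < 1 - rho l1 p1 p2 := by
    rw [one_sub_rho hden.ne']
    exact div_pos (sub_pos.mpr hstab) hden
  linarith

end DominantSystem

open DominantSystem in
theorem normalization_dominant1 (l1 p1 p2 : ℝ)
    (hl1 : l1 ∈ Set.Ioo (0:ℝ) 1) (hp1 : p1 ∈ Set.Ioc (0:ℝ) 1) (hp2 : p2 ∈ Set.Icc (0:ℝ) 1)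
    (hstab : l1 < p1 / (1 + p1*p2)) :
    (p1 - l1*(1 + p1*p2)) / (p1 * (1 - l1)) * (1 + l1*p2 / (1 - l1*p2)) *
      (∑' k : ℕ, (l1 * (1 - p1 + l1*p1*p2) / (p1 * (1 - l1) * (1 - l1*p2)))^k) = 1 := by
  obtain ⟨hl0, hl1⟩ := hl1
  obtain ⟨hp10, hp11⟩ := hp1
  obtain ⟨hp20, hp21⟩ := hp2
  have hstab : l1*(1 + p1*p2) < p1 := (lt_div_iff₀ (by positivity)).mp hstab
  have hl1p2 : 0 < 1 - l1*p2 := by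
    have := mul_le_of_le_one_right hl0.le hp21
    linarith
  have hden : 0 < p1 * (1 - l1) * (1 - l1*p2) := by
    have := sub_pos.mpr hl1
    positivity
  have hρ1 := rho_lt_one hstab hden
  change pi0 l1 p1 p2 * _ * ∑' k : ℕ, rho l1 p1 p2 ^ k = 1
  rw [tsum_geometric_of_lt_one (rho_nonneg hl0.le hp10.le hp11 hp20 hden) hρ1,
    pi0_eq_one_sub_rho_mul hden.ne', one_add_div hl1p2.ne', sub_add_cancel]
  field_simp [(sub_pos.mpr hρ1).ne']
end

section
/- Let λ1 ∈ (0,1), p1 ∈ (0,1], p2 ∈ [0,1], and suppose λ1 < p1/(1 + p1·p2). Define ρ := λ1·(1 − p1 + λ1·p1·p2)/(p1·(1 − λ1)·(1 − λ1·p2)) and π0 := (p1 − λ1·(1 + p1·p2))/(p1·(1 − λ1)). Then p2·(1 − p1·λ1)·π0 + ∑' k : ℕ, p2·(1 − p1)·ρ^{k+1}·π0 = p2·(1 − λ1 − λ1·p2). -/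
/-!
With `π₀ = (p₁ - λ₁(1 + p₁p₂)) / (p₁(1 - λ₁))` and `ρ` as in the statement, one has
`π₀ = (1 - ρ)(1 - λ₁p₂)`, and the stability condition says exactly that `π₀ > 0`, i.e. `ρ < 1`.
Hence the geometric tail sums to `p₂(1 - p₁)·ρ·π₀/(1 - ρ) = p₂(1 - p₁)·ρ(1 - λ₁p₂)`, and what
remains is a polynomial identity after clearing the denominator `p₁(1 - λ₁)`.
-/

theorem tsum_mul_pow_succ_mul {K : Type*} [NormedField K] {r : K} (hr : ‖r‖ < 1) (a b : K) :
    ∑' k : ℕ, a * r ^ (k + 1) * b = a * r * b / (1 - r) := by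
  calc ∑' k : ℕ, a * r ^ (k + 1) * b = ∑' k : ℕ, a * r * b * r ^ k := by
        congr 1; ext k; ring
    _ = a * r * b / (1 - r) := by
        rw [tsum_mul_left, tsum_geometric_of_norm_lt_one hr, div_eq_mul_inv]

namespace Dominant1

/-- The ratio `ρ` of the geometric distribution `π_k = ρ^k π₀` of queue 1's first-transmission
states. -/
noncomputable def rho (l1 p1 p2 : ℝ) : ℝ :=
  l1 * (1 - p1 + l1*p1*p2) / (p1 * (1 - l1) * (1 - l1*p2))

noncomputable def pi0 (l1 p1 p2 : ℝ) : ℝ :=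
  (p1 - l1*(1 + p1*p2)) / (p1 * (1 - l1))

variable {l1 p1 p2 : ℝ}

theorem rho_mul_one_sub (h : 1 - l1*p2 ≠ 0) :
    rho l1 p1 p2 * (1 - l1*p2) = l1 * (1 - p1 + l1*p1*p2) / (p1 * (1 - l1)) := by
  rw [rho]
  field_simp

theorem pi0_eq_one_sub_rho_mul (hp1 : p1 ≠ 0) (hl1 : 1 - l1 ≠ 0) (h : 1 - l1*p2 ≠ 0) :
    pi0 l1 p1 p2 = (1 - rho l1 p1 p2) * (1 - l1*p2) := by
  rw [sub_mul, rho_mul_one_sub h, pi0]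
  field_simp
  ring

theorem one_sub_mul_pos (hl1 : l1 ∈ Set.Ioo (0:ℝ) 1) (hp2 : p2 ≤ 1) : 0 < 1 - l1*p2 := by
  nlinarith [mul_le_mul_of_nonneg_left hp2 hl1.1.le, hl1.2]

theorem rho_nonneg (hl1 : l1 ∈ Set.Ioo (0:ℝ) 1) (hp1 : p1 ∈ Set.Ioc (0:ℝ) 1)
    (hp2 : p2 ∈ Set.Icc (0:ℝ) 1) : 0 ≤ rho l1 p1 p2 := by
  have hnum : 0 ≤ 1 - p1 + l1*p1*p2 := by
    have := mul_nonneg (mul_nonneg hl1.1.le hp1.1.le) hp2.1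
    linarith [hp1.2]
  have hden : 0 < p1 * (1 - l1) * (1 - l1*p2) :=
    mul_pos (mul_pos hp1.1 (sub_pos.mpr hl1.2)) (one_sub_mul_pos hl1 hp2.2)
  exact div_nonneg (mul_nonneg hl1.1.le hnum) hden.le

theorem pi0_pos (hl1 : l1 < 1) (hp1 : 0 < p1) (hp2 : 0 ≤ p2) (hstab : l1 < p1 / (1 + p1*p2)) :
    0 < pi0 l1 p1 p2 := by
  have hnum : l1 * (1 + p1*p2) < p1 := (lt_div_iff₀ (by positivity)).mp hstab
  exact div_pos (sub_pos.mpr hnum) (mul_pos hp1 (sub_pos.mpr hl1))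

theorem rho_lt_one (hl1 : l1 ∈ Set.Ioo (0:ℝ) 1) (hp1 : 0 < p1) (hp2 : p2 ∈ Set.Icc (0:ℝ) 1)
    (hstab : l1 < p1 / (1 + p1*p2)) : rho l1 p1 p2 < 1 := by
  have hπ := pi0_pos hl1.2 hp1 hp2.1 hstab
  have hq := one_sub_mul_pos hl1 hp2.2
  rw [pi0_eq_one_sub_rho_mul hp1.ne' (sub_pos.mpr hl1.2).ne' hq.ne'] at hπ
  exact sub_pos.mp (pos_of_mul_pos_left hπ hq.le)

end Dominant1

open Dominant1 in
theorem service_rate_queue2_dominant1 (l1 p1 p2 : ℝ)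
    (hl1 : l1 ∈ Set.Ioo (0:ℝ) 1) (hp1 : p1 ∈ Set.Ioc (0:ℝ) 1) (hp2 : p2 ∈ Set.Icc (0:ℝ) 1)
    (hstab : l1 < p1 / (1 + p1*p2)) :
    p2 * (1 - p1*l1) * ((p1 - l1*(1 + p1*p2)) / (p1 * (1 - l1))) +
      (∑' k : ℕ, p2 * (1 - p1) *
        (l1 * (1 - p1 + l1*p1*p2) / (p1 * (1 - l1) * (1 - l1*p2)))^(k+1) *
        ((p1 - l1*(1 + p1*p2)) / (p1 * (1 - l1)))) =
    p2 * (1 - l1 - l1*p2) := by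
  change p2 * (1 - p1*l1) * pi0 l1 p1 p2 +
    ∑' k : ℕ, p2 * (1 - p1) * rho l1 p1 p2 ^ (k+1) * pi0 l1 p1 p2 = _
  have hρ0 := rho_nonneg hl1 hp1 hp2
  have hρ1 := rho_lt_one hl1 hp1.1 hp2 hstab
  have hp1' : p1 ≠ 0 := hp1.1.ne'
  have hl1' : 1 - l1 ≠ 0 := (sub_pos.mpr hl1.2).ne'
  have hq := (one_sub_mul_pos hl1 hp2.2).ne'
  have hπ : pi0 l1 p1 p2 / (1 - rho l1 p1 p2) = 1 - l1*p2 := by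
    rw [pi0_eq_one_sub_rho_mul hp1' hl1' hq, mul_div_cancel_left₀ _ (sub_pos.mpr hρ1).ne']
  rw [tsum_mul_pow_succ_mul (by rwa [Real.norm_of_nonneg hρ0]), mul_div_assoc, hπ,
    mul_assoc _ (rho _ _ _), rho_mul_one_sub hq, pi0]
  field_simp
  ring
end

section
/- Let λ2 ∈ (0,1), p1 ∈ (0,1), p2 ∈ (0,1]. Define S := λ2·(1 − p2 − λ2·p1·p2 + 2·p1·p2 + √(1 − 2·p2 + p2² + 4·p1·p2 − 2·λ2·p1·p2 − 2·λ2·p1·p2² + λ2²·p1²·p2²)) / (2·p2·(1 − λ2 − p1 + λ2·p1)). Then, with R the 2×2 real matrix defined below and I the 2×2 identity matrix, det(S·I − R) = 0, and every real number x with det(x·I − R) = 0 satisfies |x| ≤ S; that is, S is the spectral radius of R. -/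
/-!
The characteristic polynomial of a real `2 × 2` matrix `A` is `x ^ 2 - (tr A) x + det A`, whose
roots are `(tr A ± √(tr A ^ 2 - 4 det A)) / 2`. When `tr A ≥ 0` the root with `+` dominates the
other in absolute value. For the QBD matrix the trace is nonnegative, the determinant
`-λ₂² p₁ / ((1 - p₁)(1 - λ₂))` is negative, and `tr A ^ 2 - 4 det A` is the radicand of
`S` times `(λ₂ / ((1 - λ₂)(1 - p₁) p₂)) ^ 2`, so `S` is exactly that larger root.
-/

open Matrix

namespace Matrix

theorem det_smul_one_sub_fin_two {R : Type*} [CommRing R] (A : Matrix (Fin 2) (Fin 2) R) (x : R) :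
    (x • (1 : Matrix (Fin 2) (Fin 2) R) - A).det = x ^ 2 - A.trace * x + A.det := by
  simp [det_fin_two, trace_fin_two]
  ring

theorem det_smul_one_sub_eq_zero_iff_fin_two (A : Matrix (Fin 2) (Fin 2) ℝ)
    (hdisc : 0 ≤ A.trace ^ 2 - 4 * A.det) (x : ℝ) :
    (x • (1 : Matrix (Fin 2) (Fin 2) ℝ) - A).det = 0 ↔
      x = (A.trace + √(A.trace ^ 2 - 4 * A.det)) / 2 ∨
        x = (A.trace - √(A.trace ^ 2 - 4 * A.det)) / 2 := by
  have hsq : discrim 1 (-A.trace) A.det =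
      √(A.trace ^ 2 - 4 * A.det) * √(A.trace ^ 2 - 4 * A.det) := by
    rw [Real.mul_self_sqrt hdisc, discrim]
    ring
  have hquad := quadratic_eq_zero_iff one_ne_zero hsq x
  simp only [neg_neg, mul_one, one_mul] at hquad
  rw [det_smul_one_sub_fin_two, ← hquad]
  ring_nf

theorem larger_root_dominates_of_trace_nonneg_fin_two (A : Matrix (Fin 2) (Fin 2) ℝ)
    (htr : 0 ≤ A.trace) (hdisc : 0 ≤ A.trace ^ 2 - 4 * A.det) :
    let s := (A.trace + √(A.trace ^ 2 - 4 * A.det)) / 2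
    (s • (1 : Matrix (Fin 2) (Fin 2) ℝ) - A).det = 0 ∧
      ∀ x : ℝ, (x • (1 : Matrix (Fin 2) (Fin 2) ℝ) - A).det = 0 → |x| ≤ s := by
  intro s
  have hs : s = (A.trace + √(A.trace ^ 2 - 4 * A.det)) / 2 := rfl
  have hroot := det_smul_one_sub_eq_zero_iff_fin_two A hdisc
  have hsqrt := Real.sqrt_nonneg (A.trace ^ 2 - 4 * A.det)
  refine ⟨(hroot s).2 (Or.inl rfl), fun x hx => ?_⟩
  rcases (hroot x).1 hx with rfl | rfl
  · exact (abs_of_nonneg (by positivity)).le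
  · exact abs_le.2 ⟨by linarith, by linarith⟩

end Matrix

theorem QBD_spectral_radius (l2 p1 p2 : ℝ)
    (hl2 : l2 ∈ Set.Ioo (0:ℝ) 1) (hp1 : p1 ∈ Set.Ioo (0:ℝ) 1) (hp2 : p2 ∈ Set.Ioc (0:ℝ) 1) :
    let R : Matrix (Fin 2) (Fin 2) ℝ :=
      !![l2*(1 - p2 + p1*p2) / ((1 - l2)*(1 - p1)*p2), l2 / ((1 - l2)*(1 - p1)*p2);
         l2*p1 / (1 - p1), l2*p1 / (1 - p1)]
    let S : ℝ := l2 * (1 - p2 - l2*p1*p2 + 2*p1*p2 +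
      Real.sqrt (1 - 2*p2 + p2^2 + 4*p1*p2 - 2*l2*p1*p2 - 2*l2*p1*p2^2 + l2^2*p1^2*p2^2)) /
      (2*p2*(1 - l2 - p1 + l2*p1))
    (S • (1 : Matrix (Fin 2) (Fin 2) ℝ) - R).det = 0 ∧
    ∀ x : ℝ, (x • (1 : Matrix (Fin 2) (Fin 2) ℝ) - R).det = 0 → |x| ≤ S := by
  obtain ⟨hl0, hl1⟩ := hl2
  obtain ⟨hp10, hp11⟩ := hp1
  obtain ⟨hp20, hp21⟩ := hp2
  intro R S
  have h1 : 0 < 1 - l2 := by linarith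
  have h2 : 0 < 1 - p1 := by linarith
  set c := l2 / ((1 - l2) * (1 - p1) * p2) with hc
  have hc0 : 0 ≤ c := by positivity
  have htr : R.trace = c * (1 - p2 + 2*p1*p2 - l2*p1*p2) := by
    rw [trace_fin_two_of, hc]
    field_simp
    ring
  have hdet : R.det = -(l2^2*p1 / ((1 - p1)*(1 - l2))) := by
    rw [det_fin_two_of]
    field_simp
    ring
  have hdisc : R.trace ^ 2 - 4 * R.det = c ^ 2 *
      (1 - 2*p2 + p2^2 + 4*p1*p2 - 2*l2*p1*p2 - 2*l2*p1*p2^2 + l2^2*p1^2*p2^2) := by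
    rw [htr, hdet, hc]
    field_simp
    ring
  have hS : S = (R.trace + √(R.trace ^ 2 - 4 * R.det)) / 2 := by
    simp only [S]
    rw [hdisc, Real.sqrt_mul (sq_nonneg c), Real.sqrt_sq hc0, htr, hc,
      show 1 - l2 - p1 + l2 * p1 = (1 - l2) * (1 - p1) by ring]
    field_simp
    ring
  rw [hS]
  refine larger_root_dominates_of_trace_nonneg_fin_two R ?_ ?_
  · rw [htr]
    have hl2' : (0:ℝ) < 2 - l2 := by linarith
    exact mul_nonneg hc0 (by nlinarith [mul_pos (mul_pos hp10 hp20) hl2'])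
  · rw [hdet]
    linarith [sq_nonneg R.trace, show 0 ≤ l2^2*p1 / ((1 - p1)*(1 - l2)) by positivity]
end

section
/- Let λ2 ∈ (0,1), p1 ∈ (0,1), p2 ∈ (0,1], and let R be the 2×2 real matrix defined below, with I the 2×2 identity matrix. Then every real number x with det(x·I − R) = 0 satisfies |x| < 1 if and only if λ2 < p2·(1 − p1)/(1 + p1·p2). -/
open Matrix

/-- If x is a root of x² - Tx + Δ with Δ < 0, q(1) > 0 and q(-1) > 0, then |x| < 1. -/
lemma quad_root_abs_lt_one (T D x : ℝ) (h : x^2 - T*x + D = 0) (hD : D < 0)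
    (h1 : 1 - T + D > 0) (h2 : 1 + T + D > 0) : |x| < 1 := by
  have hx : x * (T - x) = D := by nlinarith
  rw [abs_lt]
  constructor
  · by_contra hle
    push_neg at hle
    -- x ≤ -1, so x < 0, hence T - x > 0, so T > x; then (1+x)(1+T-x) = 1+T+D ≤ 0
    have hx0 : x < 0 := by linarith
    have hTx : T - x > 0 := by nlinarith
    nlinarith [mul_nonpos_of_nonpos_of_nonneg (by linarith : 1 + x ≤ 0) (by linarith : (0:ℝ) ≤ 1 + T - x)]
  · by_contra hge
    push_neg at hge
    have hx0 : x > 0 := by linarith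
    have hTx : T - x < 0 := by nlinarith
    nlinarith [mul_nonpos_of_nonneg_of_nonpos (by linarith : (0:ℝ) ≤ 1 + x - T) (by linarith : 1 - x ≤ 0)]

set_option maxHeartbeats 1000000 in
theorem QBD_stability_condition (l2 p1 p2 : ℝ)
    (hl2 : l2 ∈ Set.Ioo (0:ℝ) 1) (hp1 : p1 ∈ Set.Ioo (0:ℝ) 1) (hp2 : p2 ∈ Set.Ioc (0:ℝ) 1) :
    let R : Matrix (Fin 2) (Fin 2) ℝ :=
      !![l2*(1 - p2 + p1*p2) / ((1 - l2)*(1 - p1)*p2), l2 / ((1 - l2)*(1 - p1)*p2);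
         l2*p1 / (1 - p1), l2*p1 / (1 - p1)]
    (∀ x : ℝ, (x • (1 : Matrix (Fin 2) (Fin 2) ℝ) - R).det = 0 → |x| < 1) ↔
      l2 < p2 * (1 - p1) / (1 + p1*p2) := by
  obtain ⟨hl0, hl1⟩ := hl2
  obtain ⟨hp10, hp11⟩ := hp1
  obtain ⟨hp20, hp21⟩ := hp2
  intro R
  have h1l : (0:ℝ) < 1 - l2 := by linarith
  have h1p : (0:ℝ) < 1 - p1 := by linarith
  have hDpos : (0:ℝ) < (1 - l2)*(1 - p1)*p2 := by positivity
  have hDne : ((1 - l2)*(1 - p1)*p2 : ℝ) ≠ 0 := ne_of_gt hDpos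
  set a : ℝ := l2*(1 - p2 + p1*p2) / ((1 - l2)*(1 - p1)*p2) with ha
  set b : ℝ := l2 / ((1 - l2)*(1 - p1)*p2) with hb
  set c : ℝ := l2*p1 / (1 - p1) with hc
  have hRval : R = !![a, b; c, c] := rfl
  have hdet : ∀ x : ℝ, (x • (1 : Matrix (Fin 2) (Fin 2) ℝ) - R).det
      = x^2 - (a + c)*x + (a*c - b*c) := by
    intro x
    have hM : x • (1 : Matrix (Fin 2) (Fin 2) ℝ) - R = !![x - a, -b; -c, x - c] := by
      rw [hRval]
      ext i j
      fin_cases i <;> fin_cases j <;>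
        simp [Matrix.one_apply]
    rw [hM, Matrix.det_fin_two_of]
    ring
  -- sign facts
  have hp2102 : (0:ℝ) < 1 - p2 + p1*p2 := by nlinarith
  have hapos : 0 < a := by rw [ha]; positivity
  have hcpos : 0 < c := by rw [hc]; positivity
  have hq1 : 1 - (a + c) + (a*c - b*c)
      = (p2*(1 - p1) - l2*(1 + p1*p2)) / ((1 - l2)*(1 - p1)*p2) := by
    rw [ha, hb, hc]
    field_simp
    ring
  have hDelta : a*c - b*c = -(l2^2*p1) / ((1 - l2)*(1 - p1)) := by
    rw [ha, hb, hc]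
    field_simp
    ring
  have hDeltaneg : a*c - b*c < 0 := by
    rw [hDelta]
    have : (0:ℝ) < l2^2*p1 := by positivity
    have h2 : (0:ℝ) < (1 - l2)*(1 - p1) := by positivity
    exact div_neg_of_neg_of_pos (by linarith) h2
  have hRHSpos : (0:ℝ) < 1 + p1*p2 := by nlinarith
  constructor
  · -- forward: contrapose
    intro hall
    by_contra hge
    push_neg at hge
    rw [div_le_iff₀ hRHSpos] at hge
    -- q(1) ≤ 0
    have hq1le : 1 - (a + c) + (a*c - b*c) ≤ 0 := by
      rw [hq1]
      apply div_nonpos_of_nonpos_of_nonneg _ (le_of_lt hDpos)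
      nlinarith
    -- find a root ≥ 1 by IVT
    set T : ℝ := a + c
    set Dl : ℝ := a*c - b*c
    set M : ℝ := 1 + |T| + |Dl|
    have hM1 : (1:ℝ) ≤ M := by
      have := abs_nonneg T; have := abs_nonneg Dl
      simp only [M]; linarith
    have hfM : 0 ≤ M^2 - T*M + Dl := by
      have h1 : T ≤ |T| := le_abs_self T
      have h2 : -|Dl| ≤ Dl := neg_abs_le Dl
      have h3 : 0 ≤ |T| := abs_nonneg T
      have h4 : 0 ≤ |Dl| := abs_nonneg Dl
      have hM0 : (0:ℝ) ≤ M := by linarith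
      have h5 : T*M ≤ (|T|) * M := mul_le_mul_of_nonneg_right h1 hM0
      have h6 : M*(M - (|T|)) = M + M*(|Dl|) := by simp only [M]; ring
      have h7 : (|Dl|) ≤ M*(|Dl|) := le_mul_of_one_le_left h4 hM1
      nlinarith
    have hcont : ContinuousOn (fun x : ℝ => x^2 - T*x + Dl) (Set.Icc 1 M) := by
      fun_prop
    have hIVT := intermediate_value_Icc hM1 hcont
    have h0mem : (0:ℝ) ∈ Set.Icc ((fun x : ℝ => x^2 - T*x + Dl) 1) ((fun x : ℝ => x^2 - T*x + Dl) M) := by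
      constructor
      · simpa using by linarith [hq1le]
      · simpa using hfM
    obtain ⟨x, hxmem, hxroot⟩ := hIVT h0mem
    have := hall x (by rw [hdet x]; simpa using hxroot)
    have hx1 : 1 ≤ x := hxmem.1
    rw [abs_lt] at this
    linarith [this.2]
  · -- backward
    intro hlt x hx
    rw [hdet x] at hx
    have hnum : 0 < p2*(1 - p1) - l2*(1 + p1*p2) := by
      rw [lt_div_iff₀ hRHSpos] at hlt
      linarith
    have hq1pos : 0 < 1 - (a + c) + (a*c - b*c) := by
      rw [hq1]; positivity
    have hl1p : l2 < 1 - p1 := by nlinarith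
    have hkey : l2^2*p1 < (1 - l2)*(1 - p1) := by nlinarith
    have hDgt : -(1:ℝ) < a*c - b*c := by
      rw [hDelta, neg_div]
      have h2 : l2^2*p1/((1 - l2)*(1 - p1)) < 1 :=
        (div_lt_one (by positivity : (0:ℝ) < (1 - l2)*(1 - p1))).mpr hkey
      linarith
    have hqm1pos : 0 < 1 + (a + c) + (a*c - b*c) := by
      linarith
    exact quad_root_abs_lt_one (a + c) (a*c - b*c) x hx hDeltaneg hq1pos hqm1pos
end

section
/- Let λ2 ∈ (0,1), p1 ∈ (0,1), p2 ∈ (0,1], and suppose λ2 < p2·(1 − p1)/(1 + p1·p2). Let R be the 2×2 real matrix defined below and I the 2×2 identity matrix. Then I − R is invertible, and (1, 1) · (I − R)⁻¹ · (1, 0)ᵀ = (1 − λ2)·(1 − p1)·p2 / (p2 − λ2 − p1·p2 − λ2·p1·p2); equivalently, the number π0' := (p2 − λ2 − p1·p2 − λ2·p1·p2)/((1 − λ2)·(1 − p1)·p2) satisfies (1, 1) · (I − R)⁻¹ · (π0', 0)ᵀ = 1. -/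
/-! The second row of `I - R` sums to `1`, so the adjugate formula for a `2 × 2` inverse gives
`(1, 1) · (I - R)⁻¹ · (1, 0)ᵀ = 1 / det (I - R)`, and `det (I - R)` is exactly `π0'`.
The stability condition makes the numerator of `π0'` positive, so `I - R` is invertible. -/

open Matrix

theorem Matrix.ones_dotProduct_inv_mulVec_fin_two {K : Type*} [Field K]
    (M : Matrix (Fin 2) (Fin 2) K) (a : K) :
    ![(1 : K), 1] ⬝ᵥ (M⁻¹ *ᵥ ![a, 0]) = a * (M 1 1 - M 1 0) / M.det := by
  rw [inv_def, Ring.inverse_eq_inv', adjugate_fin_two]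
  simp only [dotProduct, mulVec, Fin.sum_univ_two, smul_apply, of_apply, cons_val_zero,
    cons_val_one, smul_eq_mul]
  ring

section QBD

variable (l2 p1 p2 : ℝ)

noncomputable def qbdRateMatrix : Matrix (Fin 2) (Fin 2) ℝ :=
  !![l2*(1 - p2 + p1*p2) / ((1 - l2)*(1 - p1)*p2), l2 / ((1 - l2)*(1 - p1)*p2);
     l2*p1 / (1 - p1), l2*p1 / (1 - p1)]

theorem one_sub_qbdRateMatrix_row_one_sub :
    (1 - qbdRateMatrix l2 p1 p2) 1 1 - (1 - qbdRateMatrix l2 p1 p2) 1 0 = 1 := by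
  simp [qbdRateMatrix]

variable {l2 p1 p2}

theorem det_one_sub_qbdRateMatrix (hl2 : l2 ≠ 1) (hp1 : p1 ≠ 1) (hp2 : p2 ≠ 0) :
    (1 - qbdRateMatrix l2 p1 p2).det =
      (p2 - l2 - p1*p2 - l2*p1*p2) / ((1 - l2)*(1 - p1)*p2) := by
  have hl2' : 1 - l2 ≠ 0 := sub_ne_zero.2 hl2.symm
  have hp1' : 1 - p1 ≠ 0 := sub_ne_zero.2 hp1.symm
  rw [det_fin_two]
  simp only [qbdRateMatrix, Matrix.sub_apply, one_apply, ↓reduceIte, of_apply, cons_val',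
    cons_val_zero, cons_val_fin_one, cons_val_one, zero_ne_one, zero_sub, one_ne_zero, mul_neg,
    neg_mul, neg_neg]
  field_simp
  ring

theorem qbd_numerator_pos (hp1 : 0 < p1) (hp2 : 0 < p2)
    (hstab : l2 < p2 * (1 - p1) / (1 + p1*p2)) :
    0 < p2 - l2 - p1*p2 - l2*p1*p2 := by
  have hstab' := (lt_div_iff₀ (by positivity)).1 hstab
  linarith

end QBD

theorem QBD_normalization (l2 p1 p2 : ℝ)
    (hl2 : l2 ∈ Set.Ioo (0:ℝ) 1) (hp1 : p1 ∈ Set.Ioo (0:ℝ) 1) (hp2 : p2 ∈ Set.Ioc (0:ℝ) 1)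
    (hstab : l2 < p2 * (1 - p1) / (1 + p1*p2)) :
    let R : Matrix (Fin 2) (Fin 2) ℝ :=
      !![l2*(1 - p2 + p1*p2) / ((1 - l2)*(1 - p1)*p2), l2 / ((1 - l2)*(1 - p1)*p2);
         l2*p1 / (1 - p1), l2*p1 / (1 - p1)]
    let pi0 : ℝ := (p2 - l2 - p1*p2 - l2*p1*p2) / ((1 - l2)*(1 - p1)*p2)
    IsUnit (1 - R) ∧
    (![(1:ℝ), 1] ⬝ᵥ ((1 - R)⁻¹ *ᵥ ![(1:ℝ), 0])) =
      (1 - l2)*(1 - p1)*p2 / (p2 - l2 - p1*p2 - l2*p1*p2) ∧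
    (![(1:ℝ), 1] ⬝ᵥ ((1 - R)⁻¹ *ᵥ ![pi0, 0])) = 1 := by
  intro R pi0
  have hdet : (1 - R).det = pi0 :=
    det_one_sub_qbdRateMatrix hl2.2.ne hp1.2.ne hp2.1.ne'
  have hpi0 : pi0 ≠ 0 :=
    div_ne_zero (qbd_numerator_pos hp1.1 hp2.1 hstab).ne' <|
      mul_ne_zero (mul_ne_zero (sub_ne_zero.2 hl2.2.ne') (sub_ne_zero.2 hp1.2.ne')) hp2.1.ne'
  have hrow : (1 - R) 1 1 - (1 - R) 1 0 = 1 := one_sub_qbdRateMatrix_row_one_sub l2 p1 p2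
  refine ⟨(isUnit_iff_isUnit_det _).2 (hdet ▸ hpi0.isUnit), ?_, ?_⟩
  · rw [ones_dotProduct_inv_mulVec_fin_two, hrow, hdet, mul_one, one_div_div]
  · rw [ones_dotProduct_inv_mulVec_fin_two, hrow, hdet, mul_one, div_self hpi0]
end
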